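/- arXiv:1805.01291 — 5 statements merged into one kernel-verified Lean document; each statement's English description precedes it below -/
import Mathlib

section
/- Let $p \ge 2$ and let $a, b \in \{0,\dots,9\}$ with $a < b$. For every integer $m \ge 10^{p-1}$, the number of integers $j$ with $10^{p-1} \le j \le m$ whose $p$-th digit is $a$ is at least the number of integers $j$ with $10^{p-1} \le j \le m$ whose $p$-th digit is $b$. -/
/-!
Lowering the `p`-th digit of `j` from `b` to `a`, i.e. subtracting `(b - a) * 10 ^ e` where `10 ^ e`
is the place value of that digit, keeps the digits above it and hence the number of digits of `j`
(here `p ≥ 2` matters: the leading digit is untouched). So it is an injection from the integers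
in `[10 ^ (p - 1), m]` with `p`-th digit `b` into those with `p`-th digit `a`.
-/

open Finset Real Filter

noncomputable section

/-- The `p`-th digit (from the left) of `j` in base 10. -/
def pthDigit (p j : ℕ) : ℕ := j / 10 ^ (Nat.log 10 j + 1 - p) % 10

/-- Number of integers `j` with `10^(p-1) ≤ j ≤ n` whose `p`-th digit is `d`. -/
def digitCount (p d n : ℕ) : ℕ :=
  ((Finset.Icc (10 ^ (p - 1)) n).filter (fun j => pthDigit p j = d)).card

/-- The two-stage uniform model probability `P_{(d,n,p)}`. -/
def Pdig (p d n : ℕ) : ℝ :=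
  (1 / ((n : ℝ) + 1 - 10 ^ (p - 1))) *
    ∑ i ∈ Finset.Icc (10 ^ (p - 1)) n, (digitCount p d i : ℝ) / ((i : ℝ) + 1 - 10 ^ (p - 1))

namespace Nat

theorem sub_div_of_le_mod {d c k : ℕ} (hc : c ≤ d % k) : (d - c) / k = d / k := by
  rcases k.eq_zero_or_pos with rfl | hk
  · simp
  have hsplit : d - c = (d % k - c) + k * (d / k) := by
    have := Nat.mod_add_div d k
    omega
  rw [hsplit, Nat.add_mul_div_left _ _ hk,
    Nat.div_eq_of_lt (by have := Nat.mod_lt d hk; omega), zero_add]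

theorem log_eq_of_div_pow_eq {k n m s : ℕ} (h : n / k ^ s = m / k ^ s) (hpos : 0 < n / k ^ s) :
    log k n = log k m := by
  rcases le_or_gt k 1 with hk | hk
  · simp [log_of_left_le_one hk]
  have hn : s ≤ log k n := le_log_of_pow_le hk ((Nat.div_pos_iff.mp hpos).2)
  have hm : s ≤ log k m := le_log_of_pow_le hk ((Nat.div_pos_iff.mp (h ▸ hpos)).2)
  have := congrArg (log k) h
  rw [log_div_base_pow, log_div_base_pow] at this
  omega

theorem sub_mul_pow_div_pow (j c k e : ℕ) : (j - c * k ^ e) / k ^ e = j / k ^ e - c := by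
  rw [mul_comm, Nat.sub_mul_div]

section DigitLowering

variable {k j e c : ℕ}

theorem mul_pow_le_of_le_digit (hc : c ≤ j / k ^ e % k) : c * k ^ e ≤ j :=
  (Nat.mul_le_mul_right _ (hc.trans (Nat.mod_le _ _))).trans (Nat.div_mul_le_self _ _)

theorem sub_mul_pow_digit (hc : c ≤ j / k ^ e % k) :
    (j - c * k ^ e) / k ^ e % k = j / k ^ e % k - c := by
  rw [sub_mul_pow_div_pow, Nat.mod_sub_of_le hc]

theorem sub_mul_pow_div_pow_succ (hc : c ≤ j / k ^ e % k) :
    (j - c * k ^ e) / k ^ (e + 1) = j / k ^ (e + 1) := by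
  rw [pow_succ, ← Nat.div_div_eq_div_mul, ← Nat.div_div_eq_div_mul, sub_mul_pow_div_pow,
    sub_div_of_le_mod hc]

end DigitLowering

end Nat

def lowerPthDigit (p c j : ℕ) : ℕ := j - c * 10 ^ (Nat.log 10 j + 1 - p)

section LowerPthDigit

variable {p c j : ℕ}

theorem log_lowerPthDigit (hp : 2 ≤ p) (hj : 10 ^ (p - 1) ≤ j) (hc : c ≤ pthDigit p j) :
    Nat.log 10 (lowerPthDigit p c j) = Nat.log 10 j := by
  have hlog : p - 1 ≤ Nat.log 10 j := Nat.le_log_of_pow_le (by norm_num) hj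
  have hj0 : j ≠ 0 := Nat.pos_iff_ne_zero.mp (lt_of_lt_of_le (by positivity) hj)
  have hhigh : 10 ^ (Nat.log 10 j + 1 - p + 1) ≤ j := Nat.pow_le_of_le_log hj0 (by omega)
  exact (Nat.log_eq_of_div_pow_eq (Nat.sub_mul_pow_div_pow_succ hc).symm
    (Nat.div_pos hhigh (by positivity))).symm

theorem pthDigit_lowerPthDigit (hp : 2 ≤ p) (hj : 10 ^ (p - 1) ≤ j) (hc : c ≤ pthDigit p j) :
    pthDigit p (lowerPthDigit p c j) = pthDigit p j - c := by
  rw [pthDigit, log_lowerPthDigit hp hj hc]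
  exact Nat.sub_mul_pow_digit hc

theorem pow_le_lowerPthDigit (hp : 2 ≤ p) (hj : 10 ^ (p - 1) ≤ j) (hc : c ≤ pthDigit p j) :
    10 ^ (p - 1) ≤ lowerPthDigit p c j := by
  have hlog : p - 1 ≤ Nat.log 10 j := Nat.le_log_of_pow_le (by norm_num) hj
  rw [← log_lowerPthDigit hp hj hc] at hlog
  refine Nat.pow_le_of_le_log (fun h0 => ?_) hlog
  rw [h0, Nat.log_zero_right] at hlog
  omega

theorem lowerPthDigit_injOn (hp : 2 ≤ p) :
    Set.InjOn (lowerPthDigit p c) {j | 10 ^ (p - 1) ≤ j ∧ c ≤ pthDigit p j} := by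
  rintro j₁ ⟨hj₁, hc₁⟩ j₂ ⟨hj₂, hc₂⟩ heq
  have hlog : Nat.log 10 j₁ = Nat.log 10 j₂ := by
    rw [← log_lowerPthDigit hp hj₁ hc₁, ← log_lowerPthDigit hp hj₂ hc₂, heq]
  have hle₁ := Nat.mul_pow_le_of_le_digit hc₁
  have hle₂ := Nat.mul_pow_le_of_le_digit hc₂
  unfold lowerPthDigit at heq
  rw [hlog] at hle₁ heq
  omega

end LowerPthDigit

theorem stmt3_general (p a b m : ℕ) (hp : 2 ≤ p) (hab : a < b) :
    ((Finset.Icc (10 ^ (p - 1)) m).filter (fun j => pthDigit p j = b)).card ≤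
    ((Finset.Icc (10 ^ (p - 1)) m).filter (fun j => pthDigit p j = a)).card := by
  refine card_le_card_of_injOn (lowerPthDigit p (b - a)) ?_
    ((lowerPthDigit_injOn hp).mono fun j hj => ?_)
  · intro j hj
    simp only [coe_filter, mem_Icc, Set.mem_ofPred_eq] at hj ⊢
    obtain ⟨⟨hj, hjm⟩, hdigit⟩ := hj
    have hc : b - a ≤ pthDigit p j := by omega
    refine ⟨⟨pow_le_lowerPthDigit hp hj hc, (Nat.sub_le _ _).trans hjm⟩, ?_⟩
    rw [pthDigit_lowerPthDigit hp hj hc]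
    omega
  · simp only [coe_filter, mem_Icc, Set.mem_ofPred_eq] at hj ⊢
    omega

theorem stmt3 (p a b m : ℕ) (hp : 2 ≤ p) (ha : a ≤ 9) (hb : b ≤ 9) (hab : a < b)
    (hm : 10 ^ (p - 1) ≤ m) :
    ((Finset.Icc (10 ^ (p - 1)) m).filter (fun j => pthDigit p j = b)).card ≤
    ((Finset.Icc (10 ^ (p - 1)) m).filter (fun j => pthDigit p j = a)).card :=
  stmt3_general p a b m hp hab
end
end

section
/- Let $p \ge 2$, $d \in \{0,\dots,9\}$, and $n \ge 10^{p-1}$, and define $P_{(d,n,p)}$ as in the two-stage uniform model. For all $a, b \in \{0,\dots,9\}$ with $a < b$ one has $P_{(a,n,p)} \ge P_{(b,n,p)}$. -/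
/-!
Lowering the `p`-th digit of `j` from `b` to `a`, i.e. subtracting `(b - a) * 10 ^ e` where `10 ^ e`
is the place value of that digit, is injective and keeps `j` inside the range counted by
`digitCount`: since `p ≥ 2` the leading digit is untouched, so neither the number of digits of `j`
nor `10 ^ (p - 1) ≤ j` is affected. Hence `digitCount p b i ≤ digitCount p a i` for every `i`, and
`Pdig` is a positive combination of these counts.
-/

open Finset Real Filter

noncomputable section

/-- Exponent of the place value of the `p`-th digit of `j`. -/
abbrev digitPlace (p j : ℕ) : ℕ := Nat.log 10 j + 1 - p

def lowerDigit (p c j : ℕ) : ℕ := j - c * 10 ^ digitPlace p j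

section LowerDigit

variable {p c j : ℕ}

lemma pthDigit_eq_div_mod (p j : ℕ) : pthDigit p j = j / 10 ^ digitPlace p j % 10 := rfl

lemma sub_one_add_digitPlace (hp : 1 ≤ p) (hj : 10 ^ (p - 1) ≤ j) :
    p - 1 + digitPlace p j = Nat.log 10 j := by
  have := Nat.le_log_of_pow_le (by norm_num) hj
  unfold digitPlace
  omega

lemma pow_le_div_pow_digitPlace (hp : 1 ≤ p) (hj : 10 ^ (p - 1) ≤ j) :
    10 ^ (p - 1) ≤ j / 10 ^ digitPlace p j := by
  rw [Nat.le_div_iff_mul_le (by positivity), ← pow_add, sub_one_add_digitPlace hp hj]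
  have := Nat.one_le_pow (p - 1) 10 (by norm_num)
  exact Nat.pow_log_le_self 10 (by omega)

lemma pow_le_div_pow_digitPlace_sub (hp : 2 ≤ p) (hj : 10 ^ (p - 1) ≤ j)
    (hc : c ≤ pthDigit p j) : 10 ^ (p - 1) ≤ j / 10 ^ digitPlace p j - c := by
  set q := j / 10 ^ digitPlace p j
  have hq : 10 ^ (p - 1) ≤ q := pow_le_div_pow_digitPlace (by omega) hj
  have hpow : 10 ^ (p - 1) = 10 ^ (p - 2) * 10 := by rw [← pow_succ]; congr 1; omega
  have hq10 : 10 ^ (p - 2) ≤ q / 10 := by rw [Nat.le_div_iff_mul_le (by norm_num)]; omega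
  have := Nat.div_add_mod q 10
  rw [pthDigit_eq_div_mod] at hc
  omega

lemma lowerDigit_eq (hc : c ≤ j / 10 ^ digitPlace p j) :
    lowerDigit p c j =
      (j / 10 ^ digitPlace p j - c) * 10 ^ digitPlace p j + j % 10 ^ digitPlace p j := by
  have := Nat.div_add_mod' j (10 ^ digitPlace p j)
  have : c * 10 ^ digitPlace p j ≤ j / 10 ^ digitPlace p j * 10 ^ digitPlace p j :=
    Nat.mul_le_mul_right _ hc
  rw [lowerDigit, Nat.sub_mul]
  omega

lemma le_div_pow_digitPlace (hc : c ≤ pthDigit p j) : c ≤ j / 10 ^ digitPlace p j :=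
  hc.trans (Nat.mod_le _ _)

lemma mul_pow_digitPlace_le (hc : c ≤ pthDigit p j) : c * 10 ^ digitPlace p j ≤ j :=
  calc c * 10 ^ digitPlace p j ≤ j / 10 ^ digitPlace p j * 10 ^ digitPlace p j :=
        Nat.mul_le_mul_right _ (le_div_pow_digitPlace hc)
    _ ≤ j := Nat.div_mul_le_self _ _

variable (hp : 2 ≤ p) (hj : 10 ^ (p - 1) ≤ j) (hc : c ≤ pthDigit p j)
include hp hj hc

lemma log_lowerDigit : Nat.log 10 (lowerDigit p c j) = Nat.log 10 j := by
  apply Nat.log_eq_of_pow_le_of_lt_pow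
  · rw [lowerDigit_eq (le_div_pow_digitPlace hc)]
    calc 10 ^ Nat.log 10 j = 10 ^ (p - 1) * 10 ^ digitPlace p j := by
          rw [← pow_add, sub_one_add_digitPlace (by omega) hj]
      _ ≤ (j / 10 ^ digitPlace p j - c) * 10 ^ digitPlace p j :=
        Nat.mul_le_mul_right _ (pow_le_div_pow_digitPlace_sub hp hj hc)
      _ ≤ _ := Nat.le_add_right _ _
  · exact (Nat.sub_le _ _).trans_lt (Nat.lt_pow_succ_log_self (by norm_num) j)

lemma pthDigit_lowerDigit : pthDigit p (lowerDigit p c j) = pthDigit p j - c := by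
  have hdiv : lowerDigit p c j / 10 ^ digitPlace p j = j / 10 ^ digitPlace p j - c := by
    rw [lowerDigit_eq (le_div_pow_digitPlace hc), mul_comm, Nat.mul_add_div (by positivity),
      Nat.div_eq_of_lt (Nat.mod_lt _ (by positivity)), Nat.add_zero]
  rw [pthDigit_eq_div_mod, digitPlace, log_lowerDigit hp hj hc, ← digitPlace, hdiv]
  rw [pthDigit_eq_div_mod] at hc ⊢
  have := Nat.div_add_mod (j / 10 ^ digitPlace p j) 10
  omega

lemma pow_le_lowerDigit : 10 ^ (p - 1) ≤ lowerDigit p c j := by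
  rw [lowerDigit_eq (le_div_pow_digitPlace hc)]
  calc 10 ^ (p - 1) ≤ j / 10 ^ digitPlace p j - c := pow_le_div_pow_digitPlace_sub hp hj hc
    _ ≤ (j / 10 ^ digitPlace p j - c) * 10 ^ digitPlace p j :=
      Nat.le_mul_of_pos_right _ (by positivity)
    _ ≤ _ := Nat.le_add_right _ _

end LowerDigit

lemma digitCount_le_digitCount {p a b : ℕ} (hp : 2 ≤ p) (hab : a ≤ b) (n : ℕ) :
    digitCount p b n ≤ digitCount p a n := by
  unfold digitCount
  have hsub : ∀ {j}, pthDigit p j = b → b - a ≤ pthDigit p j := fun h => h ▸ Nat.sub_le _ _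
  apply card_le_card_of_injOn (lowerDigit p (b - a))
  · intro j hj
    simp only [coe_filter, mem_Icc, Set.mem_ofPred_eq] at hj ⊢
    obtain ⟨⟨hj, hjn⟩, hd⟩ := hj
    refine ⟨⟨pow_le_lowerDigit hp hj (hsub hd), (Nat.sub_le _ _).trans hjn⟩, ?_⟩
    rw [pthDigit_lowerDigit hp hj (hsub hd), hd]
    omega
  · intro x hx y hy hxy
    simp only [coe_filter, mem_Icc, Set.mem_ofPred_eq] at hx hy
    have hlog : digitPlace p x = digitPlace p y := by
      rw [digitPlace, ← log_lowerDigit hp hx.1.1 (hsub hx.2), hxy, log_lowerDigit hp hy.1.1 (hsub hy.2)]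
    unfold lowerDigit at hxy
    rw [hlog] at hxy
    exact (tsub_left_inj (hlog ▸ mul_pow_digitPlace_le (hsub hx.2))
      (mul_pow_digitPlace_le (hsub hy.2))).1 hxy

lemma Pdig_le_Pdig {p a b : ℕ} (n : ℕ) (h : ∀ i, digitCount p b i ≤ digitCount p a i) :
    Pdig p b n ≤ Pdig p a n := by
  rcases (Icc (10 ^ (p - 1)) n).eq_empty_or_nonempty with hempty | ⟨i₀, hi₀⟩
  · simp [Pdig, hempty]
  have hn : (10 : ℝ) ^ (p - 1) ≤ n := by exact_mod_cast (mem_Icc.1 hi₀).1.trans (mem_Icc.1 hi₀).2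
  unfold Pdig
  gcongr with i hi
  · exact one_div_nonneg.2 (by linarith)
  · have : (10 : ℝ) ^ (p - 1) ≤ i := by exact_mod_cast (mem_Icc.1 hi).1
    linarith
  · exact_mod_cast h i

theorem stmt6_general (p n : ℕ) (hp : 2 ≤ p) :
    ∀ a b : ℕ, a ≤ 9 → b ≤ 9 → a < b → Pdig p b n ≤ Pdig p a n :=
  fun _ _ _ _ hab => Pdig_le_Pdig n (digitCount_le_digitCount hp hab.le)

theorem stmt6 (p n : ℕ) (hp : 2 ≤ p) (hn : 10 ^ (p - 1) ≤ n) :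
    ∀ a b : ℕ, a ≤ 9 → b ≤ 9 → a < b → Pdig p b n ≤ Pdig p a n :=
  stmt6_general p n hp
end
end

section
/- Let $p \ge 2$ and $d \in \{0,\dots,9\}$, and let $N \ge 10^{p-1}$ be an integer whose $p$-th digit is NOT $d$. Write $10^{p+k} \le N < 10^{p+k+1}$ with $k \ge -1$, and let $t$ be the number of indices $j \in \{10^{p-2},\dots,10^{p-1}-1\}$ such that the whole block $[(10j+d)10^{k+1}, (10j+d+1)10^{k+1}-1]$ lies in $[10^{p+k}, N]$. Then the number of integers $m$ with $10^{p-1} \le m \le N$ whose $p$-th digit is $d$ equals $10^{k+1}(10^{p-2}+t) - 10^{p-2}$. -/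
open Finset Real Filter

noncomputable section

/-!
An integer `m` with exactly `p + i` digits has `p`-th digit `m / 10 ^ i % 10`, so those with
`p`-th digit `d` are exactly the `m` with `m / 10 ^ i = 10 j + d`, where `j` runs over the
`(p - 1)`-digit numbers: they form blocks of `10 ^ i` consecutive integers. Below `10 ^ (p + K - 1)`
every length `p + i`, `i < K`, is complete and contributes `9 · 10 ^ (p - 2) · 10 ^ i`, which sums
to `10 ^ (p - 2) (10 ^ K - 1)`. Above it, since the `p`-th digit of `N` is not `d`, no block is cut
by `N`, so the remaining count is `10 ^ K` times the number of blocks lying in `[10 ^ (p + K - 1), N]`.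
-/

theorem card_filter_Ico_add_card_filter_Ico {α : Type*} [LinearOrder α] [LocallyFiniteOrder α]
    (P : α → Prop) [DecidablePred P] {a b c : α} (hab : a ≤ b) (hbc : b ≤ c) :
    #{m ∈ Ico a b | P m} + #{m ∈ Ico b c | P m} = #{m ∈ Ico a c | P m} := by
  rw [← card_union_of_disjoint (disjoint_filter_filter (Ico_disjoint_Ico_consecutive a b c)),
    ← filter_union, Ico_union_Ico_eq_Ico hab hbc]

theorem card_filter_div_mod_eq {b q d : ℕ} (hd : d < b) (hq : 0 < q) (s J : Finset ℕ)
    (hsJ : ∀ m, m / q % b = d → (m ∈ s ↔ m / q / b ∈ J)) :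
    #{m ∈ s | m / q % b = d} = #J * q := by
  have hdiv : ∀ j r, r < q → ((b * j + d) * q + r) / q = b * j + d := fun j r hr => by
    rw [Nat.add_comm, Nat.add_mul_div_right _ _ hq, Nat.div_eq_of_lt hr, zero_add]
  have hdivb : ∀ j, (b * j + d) / b = j := fun j => by
    rw [Nat.mul_add_div (by omega), Nat.div_eq_of_lt hd, add_zero]
  have hmodb : ∀ j, (b * j + d) % b = d := fun j => by
    rw [Nat.mul_add_mod, Nat.mod_eq_of_lt hd]
  calc #{m ∈ s | m / q % b = d} = #(J ×ˢ range q) := by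
        refine card_nbij' (fun m => (m / q / b, m % q)) (fun x => (b * x.1 + d) * q + x.2)
          ?_ ?_ ?_ ?_
        · intro m hm
          obtain ⟨hs, hm⟩ := mem_filter.1 hm
          exact mem_product.2 ⟨(hsJ m hm).1 hs, mem_range.2 (Nat.mod_lt m hq)⟩
        · rintro ⟨j, r⟩ hjr
          obtain ⟨hj, hr⟩ := mem_product.1 hjr
          have hr : r < q := mem_range.1 hr
          have hm : ((b * j + d) * q + r) / q % b = d := by rw [hdiv j r hr, hmodb]
          exact mem_filter.2 ⟨(hsJ _ hm).2 (by rwa [hdiv j r hr, hdivb]), hm⟩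
        · intro m hm
          dsimp only
          rw [← (mem_filter.1 hm).2, Nat.div_add_mod, Nat.div_add_mod']
        · rintro ⟨j, r⟩ hjr
          have hr : r < q := mem_range.1 (mem_product.1 hjr).2
          simp only [hdiv j r hr, hdivb, Nat.mul_add_mod_self_right, Nat.mod_eq_of_lt hr]
    _ = #J * q := by rw [card_product, card_range]

theorem div_mem_Ico_iff {m a b c : ℕ} (hc : 0 < c) :
    m / c ∈ Ico a b ↔ m ∈ Ico (a * c) (b * c) := by
  simp only [mem_Ico, Nat.le_div_iff_mul_le hc, Nat.div_lt_iff_lt_mul hc]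

theorem pthDigit_eq_div_pow_mod {p i m : ℕ} (hp : 1 ≤ p) (h₁ : 10 ^ (p + i - 1) ≤ m)
    (h₂ : m < 10 ^ (p + i)) : pthDigit p m = m / 10 ^ i % 10 := by
  have hlog : Nat.log 10 m = p + i - 1 :=
    Nat.log_eq_of_pow_le_of_lt_pow h₁ (by rwa [Nat.sub_add_cancel (by omega)])
  rw [pthDigit, hlog, show p + i - 1 + 1 - p = i by omega]

theorem card_filter_pthDigit_Ico_pow {p d : ℕ} (hp : 2 ≤ p) (hd : d < 10) (i : ℕ) :
    #{m ∈ Ico (10 ^ (p + i - 1)) (10 ^ (p + i)) | pthDigit p m = d} =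
      9 * 10 ^ (p - 2) * 10 ^ i := by
  have hq : 0 < 10 ^ i := by positivity
  rw [filter_congr fun m hm => by
    rw [pthDigit_eq_div_pow_mod (by omega) (mem_Ico.1 hm).1 (mem_Ico.1 hm).2]]
  have hlow : 10 ^ (p + i - 1) = 10 ^ (p - 2) * 10 * 10 ^ i := by
    rw [← pow_succ, ← pow_add]; congr 1; omega
  have hhigh : 10 ^ (p + i) = 10 ^ (p - 2) * 10 * 10 * 10 ^ i := by
    rw [← pow_succ, ← pow_succ, ← pow_add]; congr 1; omega
  rw [card_filter_div_mod_eq hd hq _ (Ico (10 ^ (p - 2)) (10 ^ (p - 2) * 10))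
    fun m _ => by rw [div_mem_Ico_iff (by norm_num), div_mem_Ico_iff hq, hlow, hhigh],
    Nat.card_Ico, ← Nat.mul_sub_one]
  ring

theorem card_filter_pthDigit_Ico_add_pow {p d : ℕ} (hp : 2 ≤ p) (hd : d < 10) (K : ℕ) :
    #{m ∈ Ico (10 ^ (p - 1)) (10 ^ (p + K - 1)) | pthDigit p m = d} + 10 ^ (p - 2) =
      10 ^ (p - 2) * 10 ^ K := by
  induction K with
  | zero => simp
  | succ K ih =>
    rw [show p + (K + 1) - 1 = p + K by omega,
      ← card_filter_Ico_add_card_filter_Ico _ (Nat.pow_le_pow_right (by norm_num) (by omega))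
        (Nat.pow_le_pow_right (by norm_num) (by omega) : 10 ^ (p + K - 1) ≤ 10 ^ (p + K)),
      card_filter_pthDigit_Ico_pow hp hd, pow_succ]
    linarith

theorem card_filter_pthDigit_Icc_top {p d N K : ℕ} (hp : 2 ≤ p) (hd : d < 10)
    (hdig : pthDigit p N ≠ d) (hK1 : 10 ^ (p + K - 1) ≤ N) (hK2 : N < 10 ^ (p + K)) :
    #{m ∈ Icc (10 ^ (p + K - 1)) N | pthDigit p m = d} =
      #{j ∈ Icc (10 ^ (p - 2)) (10 ^ (p - 1) - 1) |
        10 ^ (p + K - 1) ≤ (10 * j + d) * 10 ^ K ∧ (10 * j + d + 1) * 10 ^ K - 1 ≤ N} *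
        10 ^ K := by
  set q := 10 ^ K
  have hq : 0 < q := by positivity
  replace hdig : N / q % 10 ≠ d := by rwa [pthDigit_eq_div_pow_mod (by omega) hK1 hK2] at hdig
  rw [filter_congr fun m hm => by
    rw [pthDigit_eq_div_pow_mod (by omega) (mem_Icc.1 hm).1 ((mem_Icc.1 hm).2.trans_lt hK2)]]
  refine card_filter_div_mod_eq hd hq _ _ fun m hm => ?_
  have hmc : m / q * q ≤ m ∧ m < (m / q + 1) * q :=
    ⟨Nat.div_mul_le_self m q, by rw [Nat.succ_mul]; exact Nat.lt_div_mul_add hq⟩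
  have hc : 10 * (m / q / 10) + d = m / q := by omega
  have hlow : 10 ^ (p + K - 1) = 10 ^ (p - 2) * 10 * q := by
    rw [← pow_succ, ← pow_add]; congr 1; omega
  have hhigh : 10 ^ (p + K) = 10 ^ (p - 2) * 10 * 10 * q := by
    rw [← pow_succ, ← pow_succ, ← pow_add]; congr 1; omega
  rw [mem_filter, mem_Icc, mem_Icc, hc, hlow, show 10 ^ (p - 1) = 10 ^ (p - 2) * 10 by
    rw [← pow_succ]; congr 1; omega, ← Nat.le_div_iff_mul_le hq, Nat.mul_le_mul_right_iff hq]
  generalize m / q = c at hm hmc ⊢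
  constructor
  · rintro ⟨hcA, hmN⟩
    have hcN : c < 10 ^ (p - 2) * 10 * 10 := Nat.lt_of_mul_lt_mul_right (a := q) (by omega)
    -- if the block of `c` were cut by `N`, then `N / q = c` would have last digit `d`
    have hNc : (c + 1) * q ≤ N + 1 := by
      by_contra h
      exact hdig (by rw [Nat.div_eq_of_lt_le (k := c) (by omega) (by omega)]; omega)
    omega
  · rintro ⟨-, hcA, hcN⟩
    omega

theorem stmt8_general (p d N K : ℕ) (hp : 2 ≤ p) (hd : d ≤ 9)
    (hdig : pthDigit p N ≠ d)
    (hK1 : 10 ^ (p + K - 1) ≤ N) (hK2 : N < 10 ^ (p + K)) :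
    (digitCount p d N : ℤ) =
      10 ^ K * (10 ^ (p - 2) +
        (((Finset.Icc (10 ^ (p - 2)) (10 ^ (p - 1) - 1)).filter
          (fun j => 10 ^ (p + K - 1) ≤ (10 * j + d) * 10 ^ K ∧
            (10 * j + d + 1) * 10 ^ K - 1 ≤ N)).card : ℤ)) - 10 ^ (p - 2) := by
  have hd10 : d < 10 := by omega
  have hsplit : digitCount p d N =
      #{m ∈ Ico (10 ^ (p - 1)) (10 ^ (p + K - 1)) | pthDigit p m = d} +
        #{m ∈ Icc (10 ^ (p + K - 1)) N | pthDigit p m = d} := by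
    rw [digitCount, ← Ico_add_one_right_eq_Icc, ← Ico_add_one_right_eq_Icc,
      card_filter_Ico_add_card_filter_Ico _ (Nat.pow_le_pow_right (by norm_num) (by omega))
        (by omega)]
  have hlow := congrArg (Nat.cast : ℕ → ℤ) (card_filter_pthDigit_Ico_add_pow hp hd10 K)
  push_cast at hlow
  rw [hsplit, card_filter_pthDigit_Icc_top hp hd10 hdig hK1 hK2]
  push_cast
  linear_combination hlow

theorem stmt8 (p d N K : ℕ) (hp : 2 ≤ p) (hd : d ≤ 9)
    (hN : 10 ^ (p - 1) ≤ N) (hdig : pthDigit p N ≠ d)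
    (hK1 : 10 ^ (p + K - 1) ≤ N) (hK2 : N < 10 ^ (p + K)) :
    (digitCount p d N : ℤ) =
      10 ^ K * (10 ^ (p - 2) +
        (((Finset.Icc (10 ^ (p - 2)) (10 ^ (p - 1) - 1)).filter
          (fun j => 10 ^ (p + K - 1) ≤ (10 * j + d) * 10 ^ K ∧
            (10 * j + d + 1) * 10 ^ K - 1 ≤ N)).card : ℤ)) - 10 ^ (p - 2) :=
  stmt8_general p d N K hp hd hdig hK1 hK2
end
end

section
/- Let $p \ge 2$ and $d \in \{0,\dots,9\}$. The subsequence $n \mapsto P_{(d,10^n-1,p)}$ (for $n \ge p$) converges, as $n \to \infty$, to $\alpha_{(d,p)} = \frac{1}{10} + \frac{n_{(d,p)} + m_{(d,p)} - 9 l_{(d,p)} - d\, k_{(d,p)}}{9 \cdot 10^{p-1}} + \frac{1}{90}\ln\left(\frac{10^{p-1}+d}{10^{p-1}}\right) + \frac{1}{9}\ln\left(\frac{10^{p}}{10^{p}-10+d+1}\right)$, where $k_{(d,p)} = \sum_{j=10^{p-2}}^{10^{p-1}-1} \ln\frac{10j+d+1}{10j+d}$, $l_{(d,p)} = \sum_{j=10^{p-2}}^{10^{p-1}-1}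 j \ln\frac{10j+d+1}{10j+d}$, $m_{(d,p)} = \sum_{j=10^{p-2}}^{10^{p-1}-2} \ln\frac{10(j+1)+d}{10j+d+1}$, $n_{(d,p)} = \sum_{j=10^{p-2}}^{10^{p-1}-2} j \ln\frac{10(j+1)+d}{10j+d+1}$. -/
open Finset Real Filter

noncomputable section

/-!
Swapping the two summations, `(n + 1 - K) · P_{(d,n,p)}` with `K = 10^(p-1)` is the sum of the
harmonic tails `H_T - H_{j-K}`, `T = n + 1 - K`, over the `K ≤ j ≤ n` whose `p`-th digit is `d`.
For `n = 10^(p+M) - 1` these `j` fill the intervals `[(10s+d)·10^m, (10s+d+1)·10^m)` with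
`10^(p-2) ≤ s < 10^(p-1)` and `m ≤ M`. On such an interval the tails are
`log T - log (j - K) + O(1/(j-K))`, and comparing `∑ log` with `∫ log` evaluates their sum up to
`O(K)` (`O(K + M)` when `m = 0`) by `intervalModel`. Summed with geometric series, the models give
`pdigLimit p d · T + O(K² M)`, the terms of size `M · 10^M` cancelling exactly, so
`|P - pdigLimit p d| = O(M² / 10^M)`. Summation by parts turns `pdigLimit` into the stated form.
-/

open Topology

lemma log_sub_log_le_div {x y : ℝ} (hx : 0 < x) (hy : 0 < y) :
    log y - log x ≤ (y - x) / x := by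
  have h := log_le_sub_one_of_pos (div_pos hy hx)
  rw [log_div hy.ne' hx.ne'] at h
  rwa [sub_div, div_self hx.ne']

lemma div_le_log_sub_log {x y : ℝ} (hx : 0 < x) (hy : 0 < y) :
    (y - x) / y ≤ log y - log x := by
  have h := log_sub_log_le_div hy hx
  rw [show (x - y) / y = -((y - x) / y) by ring] at h
  linarith

lemma log_add_one_sub_log_mem_Icc {x : ℝ} (hx : 1 ≤ x) :
    log (x + 1) - log x ∈ Set.Icc 0 1 := by
  have hx₀ : 0 < x := by linarith
  refine ⟨sub_nonneg.2 (log_le_log hx₀ (by linarith)),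
    (log_sub_log_le_div hx₀ (by linarith)).trans ?_⟩
  rw [add_sub_cancel_left, div_le_one hx₀]
  exact hx

lemma mul_log_add_one_sub_mul_log_mem_Icc {v : ℝ} (hv : 0 < v) :
    (v + 1) * log (v + 1) - v * log v - 1 ∈ Set.Icc (log v) (log (v + 1)) := by
  have hv1 : 0 < v + 1 := by linarith
  have lower := mul_le_mul_of_nonneg_left (div_le_log_sub_log hv hv1) hv1.le
  have upper := mul_le_mul_of_nonneg_left (log_sub_log_le_div hv hv1) hv.le
  rw [mul_div_cancel₀ _ hv1.ne'] at lower
  rw [mul_div_cancel₀ _ hv.ne'] at upper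
  constructor <;> nlinarith

lemma sum_Ico_log_le {u v : ℕ} (hu : 0 < u) (huv : u ≤ v) :
    ∑ r ∈ Ico u v, log r ≤ v * log v - u * log u - ((v : ℝ) - u) := by
  induction v, huv using Nat.le_induction with
  | base => simp
  | succ v huv ih =>
    have step := (mul_log_add_one_sub_mul_log_mem_Icc (v := v)
      (by exact_mod_cast hu.trans_le huv)).1
    rw [sum_Ico_succ_top huv]
    push_cast
    linarith

lemma le_sum_Ico_log {u v : ℕ} (hu : 0 < u) (huv : u ≤ v) :
    v * log v - u * log u - ((v : ℝ) - u) - (log v - log u) ≤ ∑ r ∈ Ico u v, log r := by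
  induction v, huv using Nat.le_induction with
  | base => simp
  | succ v huv ih =>
    have step := (mul_log_add_one_sub_mul_log_mem_Icc (v := v)
      (by exact_mod_cast hu.trans_le huv)).2
    rw [sum_Ico_succ_top huv]
    push_cast
    linarith

lemma abs_mul_log_sub_shift_le {c e₀ e₁ : ℝ} (hc : 0 ≤ c) (h₀ : c < e₀)
    (h₁ : c < e₁) :
    |((e₁ - c) * log (e₁ - c) - (e₀ - c) * log (e₀ - c)) -
      (e₁ * log e₁ - e₀ * log e₀ - c * (log e₁ - log e₀))| ≤ c := by
  have shift : ∀ e, c < e →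
      -c ≤ (e - c) * log (e - c) - (e * log e - c * log e) ∧
        (e - c) * log (e - c) - (e * log e - c * log e) ≤ 0 := by
    intro e he
    have hw : 0 < e - c := by linarith
    have hle : log (e - c) - log e ≤ 0 := by
      linarith [log_le_log hw (by linarith : e - c ≤ e)]
    have hge := mul_le_mul_of_nonneg_left (log_sub_log_le_div hw (by linarith : 0 < e)) hw.le
    rw [mul_div_cancel₀ _ hw.ne', sub_sub_cancel] at hge
    constructor <;> nlinarith [mul_nonpos_of_nonneg_of_nonpos hw.le hle]
  obtain ⟨l₀, u₀⟩ := shift e₀ h₀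
  obtain ⟨l₁, u₁⟩ := shift e₁ h₁
  rw [abs_le]
  constructor <;> linarith

def harmonicTail (T x : ℕ) : ℝ := ∑ r ∈ Ioc x T, (r : ℝ)⁻¹

lemma harmonicTail_nonneg (T x : ℕ) : 0 ≤ harmonicTail T x :=
  sum_nonneg fun _ _ => by positivity

lemma harmonicTail_le_log_sub_log {x T : ℕ} (hx : 0 < x) (hxT : x ≤ T) :
    harmonicTail T x ≤ log T - log x := by
  induction T, hxT using Nat.le_induction with
  | base => simp [harmonicTail]
  | succ T hxT ih =>
    have hT : (0 : ℝ) < T := by exact_mod_cast hx.trans_le hxT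
    have step := div_le_log_sub_log hT (by linarith : (0 : ℝ) < T + 1)
    rw [harmonicTail, sum_Ioc_succ_top hxT, ← harmonicTail]
    push_cast at step ⊢
    rw [add_sub_cancel_left, one_div] at step
    linarith

lemma log_sub_log_le_harmonicTail {x T : ℕ} (hxT : x ≤ T) :
    log (T + 1) - log (x + 1) ≤ harmonicTail T x := by
  induction T, hxT using Nat.le_induction with
  | base => simp [harmonicTail]
  | succ T hxT ih =>
    have step := log_sub_log_le_div (by positivity : (0 : ℝ) < T + 1)
      (by positivity : (0 : ℝ) < T + 1 + 1)
    rw [harmonicTail, sum_Ioc_succ_top hxT, ← harmonicTail]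
    push_cast at step ⊢
    rw [add_sub_cancel_left, one_div] at step
    linarith

lemma harmonicTail_le_one_add_log (T x : ℕ) : harmonicTail T x ≤ 1 + log T := by
  have hmono : harmonicTail T x ≤ harmonicTail T 0 :=
    sum_le_sum_of_subset_of_nonneg (Ioc_subset_Ioc_left x.zero_le) fun _ _ _ => by positivity
  refine hmono.trans ?_
  rcases Nat.eq_zero_or_pos T with rfl | hT
  · simp [harmonicTail]
  · have htail := harmonicTail_le_log_sub_log one_pos hT
    rw [harmonicTail, ← sum_Ioc_consecutive _ zero_le_one hT, show Ioc 0 1 = {1} by rfl,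
      sum_singleton, ← harmonicTail]
    simp only [Nat.cast_one, log_one, sub_zero, inv_one] at htail ⊢
    linarith

lemma sum_harmonicTail_le {u v T : ℕ} (hu : 0 < u) (huv : u ≤ v) (hvT : v ≤ T) :
    ∑ x ∈ Ico u v, harmonicTail T x ≤
      ((v : ℝ) - u) * (log T + 1) - (v * log v - u * log u) + (log v - log u) := by
  have htail : ∑ x ∈ Ico u v, harmonicTail T x ≤ ∑ x ∈ Ico u v, (log T - log x) :=
    sum_le_sum fun x hx => by
      rw [mem_Ico] at hx
      exact harmonicTail_le_log_sub_log (hu.trans_le hx.1) (by omega)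
  have hlog := le_sum_Ico_log hu huv
  rw [sum_sub_distrib, sum_const, Nat.card_Ico, nsmul_eq_mul, Nat.cast_sub huv] at htail
  linarith

lemma le_sum_harmonicTail {u v T : ℕ} (huv : u ≤ v) (hvT : v ≤ T) :
    ((v : ℝ) - u) * (log T + 1) - ((v + 1) * log (v + 1) - (u + 1) * log (u + 1)) ≤
      ∑ x ∈ Ico u v, harmonicTail T x := by
  have hT : log T ≤ log (T + 1) := by
    rcases Nat.eq_zero_or_pos T with rfl | hT
    · simp
    · exact log_le_log (by positivity) (by linarith)
  have htail : ∑ x ∈ Ico u v, (log T - log ((x + 1 : ℕ) : ℝ)) ≤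
      ∑ x ∈ Ico u v, harmonicTail T x :=
    sum_le_sum fun x hx => by
      rw [mem_Ico] at hx
      have := log_sub_log_le_harmonicTail (T := T) (x := x) (by omega)
      push_cast
      linarith
  have hlog := sum_Ico_log_le (Nat.succ_pos u) (Nat.succ_le_succ huv)
  rw [sum_sub_distrib, sum_const, Nat.card_Ico, nsmul_eq_mul, Nat.cast_sub huv,
    sum_Ico_add' (fun x : ℕ => log (x : ℝ))] at htail
  push_cast at hlog
  linarith

/-- `∫_{Ah-K}^{(A+1)h-K} (log T - log x) dx` up to `O(K)`, in a form separating `A` from `h`. -/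
def intervalModel (T K A h : ℝ) : ℝ :=
  h * (log T + 1 - ((A + 1) * log (A + 1) - A * log A) - log h) + K * (log (A + 1) - log A)

lemma abs_sum_harmonicTail_sub_intervalModel_le {T K A h : ℕ} (hK : 0 < K) (hKA : K ≤ A)
    (hh : 2 ≤ h) (hT : (A + 1) * h ≤ T + K) :
    |∑ j ∈ Ico (A * h) ((A + 1) * h), harmonicTail T (j - K) - intervalModel T K A h| ≤
      K + 2 := by
  have hKu : K < A * h := by nlinarith
  have hAh : A * h ≤ (A + 1) * h := Nat.mul_le_mul_right h A.le_succ
  rw [← Nat.sub_add_cancel hKu.le, ← Nat.sub_add_cancel (hKu.le.trans hAh),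
    sum_Ico_add_right_sub_eq]
  have upper := sum_harmonicTail_le (T := T) (Nat.sub_pos_of_lt hKu)
    (Nat.sub_le_sub_right hAh K) (by omega)
  have lower := le_sum_harmonicTail (T := T) (Nat.sub_le_sub_right hAh K) (by omega)
  have hAr : (1 : ℝ) ≤ A := by exact_mod_cast hK.trans_le hKA
  have hhr : (2 : ℝ) ≤ h := by exact_mod_cast hh
  have hKr : (1 : ℝ) ≤ K := by exact_mod_cast hK
  have hKAr : (K : ℝ) ≤ A := by exact_mod_cast hKA
  have hur : ((A * h - K : ℕ) : ℝ) = A * h - K := by push_cast [Nat.cast_sub hKu.le]; ring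
  have hvr : (((A + 1) * h - K : ℕ) : ℝ) = (A + 1) * h - K := by
    push_cast [Nat.cast_sub (hKu.le.trans hAh)]; ring
  rw [hur, hvr, show (A + 1) * (h : ℝ) - K - (A * h - K) = h by ring] at upper lower
  rw [show (A + 1) * (h : ℝ) - K + 1 = (A + 1) * h - (K - 1) by ring,
    show A * (h : ℝ) - K + 1 = A * h - (K - 1) by ring] at lower
  -- `∑ log` over `[Ah - K, (A+1)h - K)` and over the interval shifted by one are compared with
  -- `∫ log` over `[Ah, (A+1)h]` shifted by `K` and by `K - 1`
  have shiftK := abs_mul_log_sub_shift_le (c := K) (e₀ := A * h) (e₁ := (A + 1) * h)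
    (by positivity) (by nlinarith) (by nlinarith)
  have shiftK' := abs_mul_log_sub_shift_le (c := K - 1) (e₀ := A * h) (e₁ := (A + 1) * h)
    (by linarith) (by nlinarith) (by nlinarith)
  rw [log_mul (by positivity) (by positivity), log_mul (by positivity) (by positivity)]
    at shiftK shiftK'
  have hvu : log ((A + 1) * h - K : ℝ) - log (A * h - K) ≤ 2 :=
    (log_sub_log_le_div (by nlinarith) (by nlinarith)).trans
      (by rw [div_le_iff₀ (by nlinarith)]; nlinarith)
  obtain ⟨hδ₀, hδ₁⟩ := log_add_one_sub_log_mem_Icc hAr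
  rw [abs_le] at shiftK shiftK' ⊢
  unfold intervalModel
  constructor <;> nlinarith

lemma abs_harmonicTail_sub_intervalModel_one_le {T K A : ℕ} (hK : 0 < K) (hKA : K ≤ A) :
    |harmonicTail T (A - K) - intervalModel T K A 1| ≤ K + 1 + log (A + 1) + log T := by
  have hAr : (1 : ℝ) ≤ A := by exact_mod_cast hK.trans_le hKA
  obtain ⟨hD₁, hD₂⟩ := mul_log_add_one_sub_mul_log_mem_Icc (by linarith : (0 : ℝ) < A)
  obtain ⟨hδ₀, hδ₁⟩ := log_add_one_sub_log_mem_Icc hAr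
  have hlogA : 0 ≤ log (A : ℝ) := log_natCast_nonneg A
  have hlogT : 0 ≤ log (T : ℝ) := log_natCast_nonneg T
  have htail := harmonicTail_le_one_add_log T (A - K)
  have htail' := harmonicTail_nonneg T (A - K)
  have hKr : (0 : ℝ) ≤ K := K.cast_nonneg
  unfold intervalModel
  rw [log_one, abs_le]
  constructor <;> nlinarith

lemma pthDigit_eq_of_mem_Ico {p L j : ℕ} (hpL : p ≤ L)
    (hj : j ∈ Ico (10 ^ (L - 1)) (10 ^ L)) :
    pthDigit p j = j / 10 ^ (L - p) % 10 := by
  rw [mem_Ico] at hj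
  have hL : 0 < L := Nat.pos_of_ne_zero fun h => by subst h; simp at hj; omega
  have hlog : Nat.log 10 j = L - 1 :=
    Nat.log_eq_of_pow_le_of_lt_pow hj.1 (by rw [Nat.sub_add_cancel hL]; exact hj.2)
  rw [pthDigit, hlog, Nat.sub_add_cancel hL]

section Blocks

variable {β : Type*} [AddCommMonoid β]

lemma sum_Ico_eq_sum_range_sum_Ico (f : ℕ → β) {g : ℕ → ℕ} (hg : Monotone g) (n : ℕ) :
    ∑ j ∈ Ico (g 0) (g n), f j = ∑ i ∈ range n, ∑ j ∈ Ico (g i) (g (i + 1)), f j := by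
  induction n with
  | zero => simp
  | succ n ih =>
    rw [sum_range_succ, ← ih, sum_Ico_consecutive _ (hg n.zero_le) (hg n.le_succ)]

lemma sum_Ico_mul_eq_sum_sum_Ico (f : ℕ → β) (a b h : ℕ) :
    ∑ j ∈ Ico (a * h) (b * h), f j =
      ∑ t ∈ Ico a b, ∑ j ∈ Ico (t * h) ((t + 1) * h), f j := by
  rcases le_or_gt a b with hab | hba
  · have hg : Monotone fun i => (a + i) * h := fun i k hik => by dsimp; gcongr
    have := sum_Ico_eq_sum_range_sum_Ico f hg (b - a)
    simp only [add_zero, Nat.add_sub_cancel' hab, ← add_assoc] at this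
    rw [this, sum_Ico_eq_sum_range]
  · rw [Ico_eq_empty_of_le (Nat.mul_le_mul_right h hba.le), Ico_eq_empty_of_le hba.le,
      sum_empty, sum_empty]

lemma sum_Ico_mul_ten_ite_mod_eq {d : ℕ} (hd : d < 10) (a b : ℕ) (F : ℕ → β) :
    ∑ t ∈ Ico (a * 10) (b * 10), (if t % 10 = d then F t else 0) =
      ∑ s ∈ Ico a b, F (10 * s + d) := by
  rw [sum_Ico_mul_eq_sum_sum_Ico]
  refine sum_congr rfl fun s _ => ?_
  rw [sum_eq_single_of_mem (10 * s + d) (by rw [mem_Ico]; omega), if_pos (by omega)]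
  intro t ht hne
  rw [mem_Ico] at ht
  exact if_neg (by omega)

lemma sum_Ico_pow_filter_pthDigit {p d : ℕ} (hp : 2 ≤ p) (hd : d < 10) (m : ℕ)
    (f : ℕ → β) :
    ∑ j ∈ Ico (10 ^ (p - 1 + m)) (10 ^ (p + m)) with pthDigit p j = d, f j =
      ∑ s ∈ Ico (10 ^ (p - 2)) (10 ^ (p - 1)),
        ∑ j ∈ Ico ((10 * s + d) * 10 ^ m) ((10 * s + d + 1) * 10 ^ m), f j := by
  have hp₁ : 10 ^ (p - 1) = 10 ^ (p - 2) * 10 := by rw [← pow_succ]; congr 1; omega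
  have hp₀ : 10 ^ p = 10 ^ (p - 1) * 10 := by rw [← pow_succ]; congr 1; omega
  rw [sum_filter, pow_add, pow_add, sum_Ico_mul_eq_sum_sum_Ico]
  have hdigit : ∀ t ∈ Ico (10 ^ (p - 1)) (10 ^ p),
      ∑ j ∈ Ico (t * 10 ^ m) ((t + 1) * 10 ^ m), (if pthDigit p j = d then f j else 0) =
        if t % 10 = d then ∑ j ∈ Ico (t * 10 ^ m) ((t + 1) * 10 ^ m), f j else 0 := by
    intro t ht
    rw [mem_Ico] at ht
    have hjt : ∀ j ∈ Ico (t * 10 ^ m) ((t + 1) * 10 ^ m), pthDigit p j = t % 10 := by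
      intro j hj
      rw [mem_Ico] at hj
      have hjL : j ∈ Ico (10 ^ (p + m - 1)) (10 ^ (p + m)) := by
        rw [mem_Ico, show p + m - 1 = p - 1 + m by omega, pow_add, pow_add]
        exact ⟨(Nat.mul_le_mul_right _ ht.1).trans hj.1,
          hj.2.trans_le (Nat.mul_le_mul_right _ ht.2)⟩
      rw [pthDigit_eq_of_mem_Ico (by omega) hjL, Nat.add_sub_cancel_left,
        Nat.div_eq_of_lt_le hj.1 hj.2]
    split_ifs with htd
    · exact sum_congr rfl fun j hj => if_pos ((hjt j hj).trans htd)
    · exact sum_eq_zero fun j hj => if_neg ((hjt j hj).symm ▸ htd)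
  rw [sum_congr rfl hdigit, hp₀, hp₁, sum_Ico_mul_ten_ite_mod_eq hd]

lemma sum_Ico_filter_pthDigit {p d : ℕ} (hp : 2 ≤ p) (hd : d < 10) (M : ℕ) (f : ℕ → β) :
    ∑ j ∈ Ico (10 ^ (p - 1)) (10 ^ (p + M)) with pthDigit p j = d, f j =
      ∑ m ∈ range (M + 1), ∑ s ∈ Ico (10 ^ (p - 2)) (10 ^ (p - 1)),
        ∑ j ∈ Ico ((10 * s + d) * 10 ^ m) ((10 * s + d + 1) * 10 ^ m), f j := by
  have hg : Monotone fun m => 10 ^ (p - 1 + m) :=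
    fun i k hik => Nat.pow_le_pow_right (by norm_num) (by omega)
  have := sum_Ico_eq_sum_range_sum_Ico (fun j => if pthDigit p j = d then f j else 0) hg (M + 1)
  simp only [add_zero, show p - 1 + (M + 1) = p + M by omega] at this
  rw [sum_filter, this]
  refine sum_congr rfl fun m _ => ?_
  rw [show p - 1 + (m + 1) = p + m by omega, ← sum_filter, sum_Ico_pow_filter_pthDigit hp hd]

end Blocks

lemma sum_Icc_inv_eq_harmonicTail {K j : ℕ} (hKj : K ≤ j) (n : ℕ) :
    ∑ i ∈ Icc j n, ((i : ℝ) + 1 - K)⁻¹ = harmonicTail (n + 1 - K) (j - K) := by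
  refine sum_nbij' (fun i => i + 1 - K) (fun r => r + K - 1) ?_ ?_ ?_ ?_ ?_
  · intro i hi; simp only [mem_Icc, mem_Ioc] at hi ⊢; omega
  · intro r hr; simp only [mem_Icc, mem_Ioc] at hr ⊢; omega
  · intro i hi; simp only [mem_Icc] at hi; omega
  · intro r hr; simp only [mem_Ioc] at hr; omega
  · intro i hi
    simp only [mem_Icc] at hi
    rw [Nat.cast_sub (by omega)]
    push_cast
    ring_nf

lemma Pdig_eq_sum_harmonicTail (p d n : ℕ) :
    Pdig p d n = (∑ j ∈ Icc (10 ^ (p - 1)) n with pthDigit p j = d,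
      harmonicTail (n + 1 - 10 ^ (p - 1)) (j - 10 ^ (p - 1))) / ((n : ℝ) + 1 - 10 ^ (p - 1)) := by
  have hswap : ∑ i ∈ Icc (10 ^ (p - 1)) n,
      (digitCount p d i : ℝ) / ((i : ℝ) + 1 - 10 ^ (p - 1)) =
      ∑ j ∈ Icc (10 ^ (p - 1)) n with pthDigit p j = d,
        ∑ i ∈ Icc j n, ((i : ℝ) + 1 - (10 ^ (p - 1) : ℕ))⁻¹ := by
    simp only [digitCount, card_eq_sum_ones, Nat.cast_sum, Nat.cast_one, div_eq_mul_inv, one_mul,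
      sum_mul, Nat.cast_pow, Nat.cast_ofNat]
    refine sum_comm' fun i j => ?_
    simp only [mem_Icc, mem_filter]
    omega
  rw [Pdig, hswap, one_div_mul_eq_div]
  congr 1
  exact sum_congr rfl fun j hj => sum_Icc_inv_eq_harmonicTail (mem_Icc.1 (mem_filter.1 hj).1).1 n

lemma sum_intervalModel (T K h : ℝ) (S : Finset ℕ) (A : ℕ → ℝ) :
    ∑ s ∈ S, intervalModel T K (A s) h =
      h * (#S * (log T + 1 - log h) - ∑ s ∈ S, ((A s + 1) * log (A s + 1) - A s * log (A s))) +
        K * ∑ s ∈ S, (log (A s + 1) - log (A s)) := by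
  simp only [intervalModel, sum_add_distrib, sum_sub_distrib, ← mul_sum, sum_const, nsmul_eq_mul]
  ring

lemma sum_range_mul_ten_pow (M : ℕ) :
    ∑ m ∈ range (M + 1), (m : ℝ) * 10 ^ m = ((9 * M - 1) * 10 ^ (M + 1) + 10) / 81 := by
  induction M with
  | zero => norm_num
  | succ M ih =>
    rw [sum_range_succ, ih]
    push_cast
    ring

def blockTailSum (p d M : ℕ) : ℝ :=
  ∑ m ∈ range (M + 1), ∑ s ∈ Ico (10 ^ (p - 2)) (10 ^ (p - 1)),
    ∑ j ∈ Ico ((10 * s + d) * 10 ^ m) ((10 * s + d + 1) * 10 ^ m),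
      harmonicTail (10 ^ (p + M) - 10 ^ (p - 1)) (j - 10 ^ (p - 1))

def blockModelSum (p d M : ℕ) : ℝ :=
  ∑ m ∈ range (M + 1), ∑ s ∈ Ico (10 ^ (p - 2)) (10 ^ (p - 1)),
    intervalModel (10 ^ (p + M) - 10 ^ (p - 1) : ℕ) (10 ^ (p - 1) : ℕ) (10 * s + d : ℕ)
      (10 ^ m : ℕ)

def pdigLimit (p d : ℕ) : ℝ :=
  (log (10 ^ (p - 1)) + 1) / 10 + log 10 / 9 -
    (∑ s ∈ Ico (10 ^ (p - 2) : ℕ) (10 ^ (p - 1)),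
      ((10 * (s : ℝ) + d + 1) * log (10 * s + d + 1) - (10 * s + d) * log (10 * s + d))) /
      (9 * 10 ^ (p - 1))

section Limit

variable {p d : ℕ}

lemma cast_ten_pow_add_sub_ten_pow (hp : 1 ≤ p) (M : ℕ) :
    ((10 ^ (p + M) - 10 ^ (p - 1) : ℕ) : ℝ) = 10 ^ (p - 1) * (10 ^ (M + 1) - 1) := by
  rw [Nat.cast_sub (Nat.pow_le_pow_right (by norm_num) (by omega))]
  push_cast
  rw [show p + M = p - 1 + (M + 1) by omega, pow_add]
  ring

lemma card_Ico_ten_pow (hp : 2 ≤ p) :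
    ((Ico (10 ^ (p - 2)) (10 ^ (p - 1))).card : ℝ) = 9 * 10 ^ (p - 1) / 10 := by
  rw [Nat.card_Ico, Nat.cast_sub (Nat.pow_le_pow_right (by norm_num) (by omega))]
  push_cast
  rw [show p - 1 = p - 2 + 1 by omega, pow_succ]
  ring

lemma Pdig_pow_sub_one_eq (hp : 2 ≤ p) (hd : d < 10) (M : ℕ) :
    Pdig p d (10 ^ (p + M) - 1) = blockTailSum p d M / (10 ^ (p + M) - 10 ^ (p - 1) : ℕ) := by
  have hpos : 0 < 10 ^ (p + M) := by positivity
  have hK : 10 ^ (p - 1) ≤ 10 ^ (p + M) := Nat.pow_le_pow_right (by norm_num) (by omega)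
  rw [Pdig_eq_sum_harmonicTail, blockTailSum, ← sum_Ico_filter_pthDigit hp hd,
    show Icc (10 ^ (p - 1)) (10 ^ (p + M) - 1) = Ico (10 ^ (p - 1)) (10 ^ (p + M)) by
      ext j; simp only [mem_Icc, mem_Ico]; omega,
    Nat.sub_add_cancel hpos, Nat.cast_sub hK, Nat.cast_sub hpos]
  push_cast
  ring_nf

lemma abs_block_sub_intervalModel_le (hp : 2 ≤ p) (hd : d < 10) {M m s : ℕ} (hm : m ≤ M)
    (hs : s ∈ Ico (10 ^ (p - 2)) (10 ^ (p - 1))) :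
    |∑ j ∈ Ico ((10 * s + d) * 10 ^ m) ((10 * s + d + 1) * 10 ^ m),
        harmonicTail (10 ^ (p + M) - 10 ^ (p - 1)) (j - 10 ^ (p - 1)) -
      intervalModel (10 ^ (p + M) - 10 ^ (p - 1) : ℕ) (10 ^ (p - 1) : ℕ) (10 * s + d : ℕ)
        (10 ^ m : ℕ)| ≤ 10 ^ (p - 1) + 2 + (2 * p + M) * log 10 := by
  rw [mem_Ico] at hs
  have hp₁ : 10 ^ (p - 1) = 10 * 10 ^ (p - 2) := by rw [← pow_succ']; congr 1; omega
  have hp₀ : 10 ^ p = 10 * 10 ^ (p - 1) := by rw [← pow_succ']; congr 1; omega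
  have hK : 0 < 10 ^ (p - 1) := by positivity
  have hKA : 10 ^ (p - 1) ≤ 10 * s + d := by omega
  have hA : 10 * s + d + 1 ≤ 10 ^ p := by omega
  have hKT : 10 ^ (p - 1) ≤ 10 ^ (p + M) := Nat.pow_le_pow_right (by norm_num) (by omega)
  have hlogA : log ((10 * s + d : ℕ) + 1 : ℝ) ≤ p * log 10 := by
    rw [← log_pow]
    exact log_le_log (by positivity) (by exact_mod_cast hA)
  have hlogT : log ((10 ^ (p + M) - 10 ^ (p - 1) : ℕ) : ℝ) ≤ (p + M) * log 10 := by
    rcases Nat.eq_zero_or_pos (10 ^ (p + M) - 10 ^ (p - 1)) with h0 | h0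
    · rw [h0, Nat.cast_zero, log_zero]; positivity
    · rw [← Nat.cast_add, ← log_pow]
      exact log_le_log (by exact_mod_cast h0) (by exact_mod_cast Nat.sub_le _ _)
  have hA₀ : 0 ≤ log ((10 * s + d : ℕ) + 1 : ℝ) :=
    log_nonneg (by linarith [Nat.cast_nonneg (α := ℝ) (10 * s + d)])
  have hT₀ := log_natCast_nonneg (10 ^ (p + M) - 10 ^ (p - 1))
  rcases Nat.eq_zero_or_pos m with rfl | hm₀
  · have h := abs_harmonicTail_sub_intervalModel_one_le (T := 10 ^ (p + M) - 10 ^ (p - 1)) hK hKA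
    rw [pow_zero, mul_one, mul_one, Nat.Ico_succ_singleton, sum_singleton, Nat.cast_one]
    push_cast at h hlogA hA₀ ⊢
    linarith
  · have hT : (10 * s + d + 1) * 10 ^ m ≤ 10 ^ (p + M) - 10 ^ (p - 1) + 10 ^ (p - 1) := by
      rw [Nat.sub_add_cancel hKT, pow_add]
      exact Nat.mul_le_mul hA (Nat.pow_le_pow_right (by norm_num) hm)
    have h := abs_sum_harmonicTail_sub_intervalModel_le hK hKA
      ((Nat.le_self_pow hm₀.ne' 10).trans' (by norm_num)) hT
    push_cast at h hlogA hA₀ ⊢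
    nlinarith

lemma abs_blockTailSum_sub_blockModelSum_le (hp : 2 ≤ p) (hd : d < 10) (M : ℕ) :
    |blockTailSum p d M - blockModelSum p d M| ≤
      (M + 1) * 10 ^ (p - 1) * (10 ^ (p - 1) + 2 + (2 * p + M) * log 10) := by
  have hcard : ((Ico (10 ^ (p - 2)) (10 ^ (p - 1))).card : ℝ) ≤ 10 ^ (p - 1) := by
    rw [card_Ico_ten_pow hp]; linarith [pow_pos (by norm_num : (0 : ℝ) < 10) (p - 1)]
  have hB : (0 : ℝ) ≤ 10 ^ (p - 1) + 2 + (2 * p + M) * log 10 := by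
    have := log_nonneg (by norm_num : (1 : ℝ) ≤ 10); positivity
  rw [blockTailSum, blockModelSum, ← sum_sub_distrib]
  refine (abs_sum_le_sum_abs _ _).trans ?_
  calc _ ≤ ∑ m ∈ range (M + 1), ∑ s ∈ Ico (10 ^ (p - 2)) (10 ^ (p - 1)),
        ((10 : ℝ) ^ (p - 1) + 2 + (2 * p + M) * log 10) :=
      sum_le_sum fun m hm => by
        rw [← sum_sub_distrib]
        exact (abs_sum_le_sum_abs _ _).trans <| sum_le_sum fun s hs =>
          abs_block_sub_intervalModel_le hp hd (Nat.lt_succ_iff.1 (mem_range.1 hm)) hs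
    _ ≤ _ := by
      simp only [sum_const, card_range, nsmul_eq_mul]
      push_cast
      rw [mul_assoc]
      gcongr

-- The `M · 10^M` terms, from `∑ m 10^m` and from `log T ≈ (p + M) log 10`, cancel.
lemma blockModelSum_eq (hp : 2 ≤ p) (M : ℕ) :
    blockModelSum p d M =
      pdigLimit p d * (10 ^ (p + M) - 10 ^ (p - 1) : ℕ) +
        10 ^ (p - 1) / 10 * ((10 ^ (M + 1) - 1) * log (10 ^ (M + 1) - 1) -
          10 ^ (M + 1) * log (10 ^ (M + 1))) +
        10 ^ (p - 1) * (M + 1) *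
          ∑ s ∈ Ico (10 ^ (p - 2) : ℕ) (10 ^ (p - 1)),
            (log (10 * (s : ℝ) + d + 1) - log (10 * s + d)) := by
  set K : ℝ := 10 ^ (p - 1) with hK
  set t : ℝ := 10 ^ (M + 1) with ht
  set W := ∑ s ∈ Ico (10 ^ (p - 2) : ℕ) (10 ^ (p - 1)),
      ((10 * (s : ℝ) + d + 1) * log (10 * s + d + 1) - (10 * s + d) * log (10 * s + d)) with hW
  set κ := ∑ s ∈ Ico (10 ^ (p - 2) : ℕ) (10 ^ (p - 1)),
      (log (10 * (s : ℝ) + d + 1) - log (10 * s + d)) with hκ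
  have hT : ((10 ^ (p + M) - 10 ^ (p - 1) : ℕ) : ℝ) = K * (t - 1) :=
    cast_ten_pow_add_sub_ten_pow (by omega) M
  have hinner : ∀ m : ℕ, ∑ s ∈ Ico (10 ^ (p - 2)) (10 ^ (p - 1)),
      intervalModel (10 ^ (p + M) - 10 ^ (p - 1) : ℕ) (10 ^ (p - 1) : ℕ) (10 * s + d : ℕ)
        (10 ^ m : ℕ) =
      (9 * K / 10 * (log (K * (t - 1)) + 1) - W) * 10 ^ m -
        9 * K / 10 * log 10 * (m * 10 ^ m) + K * κ := by
    intro m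
    rw [sum_intervalModel, card_Ico_ten_pow hp, hT]
    push_cast
    rw [log_pow, ← hW, ← hκ]
    ring
  have ht₁ : 1 < t := one_lt_pow₀ (by norm_num) (by omega)
  have hlogT : log (K * (t - 1)) = log K + log (t - 1) :=
    log_mul (by positivity) (by linarith)
  have hlogt : log t = (M + 1) * log 10 := by rw [ht, log_pow]; push_cast; ring
  rw [blockModelSum, sum_congr rfl fun m _ => hinner m, sum_add_distrib, sum_sub_distrib,
    ← sum_mul, ← mul_sum, ← mul_sum, sum_const, card_range, nsmul_eq_mul,
    geom_sum_eq (by norm_num), ← ht, sum_range_mul_ten_pow, ← ht, hlogT, hlogt, hT, pdigLimit,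
    ← hW, hK, log_pow]
  push_cast
  field_simp
  ring

lemma abs_blockModelSum_sub_le (hp : 2 ≤ p) (M : ℕ) :
    |blockModelSum p d M - pdigLimit p d * (10 ^ (p + M) - 10 ^ (p - 1) : ℕ)| ≤
      10 ^ (p - 1) * (M + 1) * (1 + log 10 + 10 ^ (p - 1)) := by
  set t : ℝ := 10 ^ (M + 1) with ht
  have ht1 : 1 < t - 1 := by
    have : (10 : ℝ) ≤ t := le_self_pow₀ (by norm_num) (by omega)
    linarith
  obtain ⟨hΦ₁, hΦ₂⟩ := mul_log_add_one_sub_mul_log_mem_Icc (v := t - 1) (by linarith)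
  rw [sub_add_cancel] at hΦ₁ hΦ₂
  have hlogt : log t = (M + 1) * log 10 := by rw [ht, log_pow]; push_cast; ring
  have hδ : ∀ s ∈ Ico (10 ^ (p - 2) : ℕ) (10 ^ (p - 1)),
      log (10 * (s : ℝ) + d + 1) - log (10 * s + d) ∈ Set.Icc 0 1 := by
    intro s hs
    have : (1 : ℝ) ≤ s := by
      exact_mod_cast (Nat.one_le_pow _ _ (by norm_num)).trans (mem_Ico.1 hs).1
    exact log_add_one_sub_log_mem_Icc (by linarith [d.cast_nonneg (α := ℝ)])
  have hκ₀ := sum_nonneg fun s hs => (hδ s hs).1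
  have hκ₁ := sum_le_card_nsmul _ _ 1 fun s hs => (hδ s hs).2
  rw [nsmul_eq_mul, mul_one, card_Ico_ten_pow hp] at hκ₁
  rw [blockModelSum_eq hp, add_assoc, add_sub_cancel_left, ← ht]
  have hK : (0 : ℝ) < 10 ^ (p - 1) := by positivity
  have hKM : (0 : ℝ) ≤ 10 ^ (p - 1) * (M + 1) := by positivity
  have hL : 0 ≤ log (10 : ℝ) := log_nonneg (by norm_num)
  have hD := mul_le_mul_of_nonneg_left hΦ₂ hK.le
  have hD' := mul_le_mul_of_nonneg_left ((log_nonneg ht1.le).trans hΦ₁) hK.le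
  have hκK := mul_le_mul_of_nonneg_left hκ₁ hKM
  have hκK' := mul_nonneg hKM hκ₀
  rw [hlogt] at hD
  rw [abs_le]
  constructor <;> nlinarith

lemma abs_Pdig_sub_pdigLimit_le (hp : 2 ≤ p) (hd : d < 10) (M : ℕ) :
    |Pdig p d (10 ^ (p + M) - 1) - pdigLimit p d| ≤
      10 ^ (p - 1) * (2 * 10 ^ (p - 1) + 3 + (2 * p + 2) * log 10) * (M + 1) ^ 2 / 10 ^ M := by
  have E₁ := abs_blockTailSum_sub_blockModelSum_le hp hd M
  have E₂ := abs_blockModelSum_sub_le (d := d) hp M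
  set K : ℝ := 10 ^ (p - 1) with hK
  have hK₁ : 1 ≤ K := one_le_pow₀ (by norm_num)
  have hL : 0 ≤ log (10 : ℝ) := log_nonneg (by norm_num)
  have hM : (0 : ℝ) ≤ M := M.cast_nonneg
  have hTM : (10 : ℝ) ^ M ≤ (10 ^ (p + M) - 10 ^ (p - 1) : ℕ) := by
    rw [cast_ten_pow_add_sub_ten_pow (by omega), pow_succ]
    nlinarith [one_le_pow₀ (M₀ := ℝ) (by norm_num : (1 : ℝ) ≤ 10) (n := M)]
  have hTpos : (0 : ℝ) < (10 ^ (p + M) - 10 ^ (p - 1) : ℕ) :=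
    (by positivity : (0 : ℝ) < 10 ^ M).trans_le hTM
  have hsum : |blockTailSum p d M - pdigLimit p d * (10 ^ (p + M) - 10 ^ (p - 1) : ℕ)| ≤
      K * (2 * K + 3 + (2 * p + 2) * log 10) * (M + 1) ^ 2 := by
    refine (abs_sub_le _ (blockModelSum p d M) _).trans ((add_le_add E₁ E₂).trans ?_)
    have hp₀ : (0 : ℝ) ≤ p := p.cast_nonneg
    have key : 0 ≤ K * (M + 1) * (M * (2 * K + 3 + (2 * p + 1) * log 10) + log 10) := by
      positivity
    linarith
  rw [Pdig_pow_sub_one_eq hp hd, div_sub' hTpos.ne', mul_comm _ (pdigLimit p d), abs_div,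
    abs_of_pos hTpos, div_le_div_iff₀ hTpos (by positivity)]
  calc _ ≤ K * (2 * K + 3 + (2 * p + 2) * log 10) * (M + 1) ^ 2 * 10 ^ M :=
        mul_le_mul_of_nonneg_right hsum (by positivity)
    _ ≤ _ := mul_le_mul_of_nonneg_left hTM (by positivity)

lemma tendsto_Pdig_pow_sub_one (hp : 2 ≤ p) (hd : d < 10) :
    Tendsto (fun M => Pdig p d (10 ^ (p + M) - 1)) atTop (𝓝 (pdigLimit p d)) := by
  set C : ℝ := 10 ^ (p - 1) * (2 * 10 ^ (p - 1) + 3 + (2 * p + 2) * log 10)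
  have hlim : Tendsto (fun M : ℕ => C * ((M : ℝ) + 1) ^ 2 / 10 ^ M) atTop (𝓝 0) := by
    have h := ((tendsto_pow_const_div_const_pow_of_one_lt 2 (by norm_num : (1 : ℝ) < 10)).comp
      (tendsto_add_atTop_nat 1)).const_mul (10 * C)
    rw [mul_zero] at h
    refine h.congr fun M => ?_
    simp only [Function.comp_apply, Nat.cast_add, Nat.cast_one, pow_succ]
    field_simp
  exact tendsto_iff_norm_sub_tendsto_zero.2
    (squeeze_zero (fun _ => norm_nonneg _) (abs_Pdig_sub_pdigLimit_le hp hd) hlim)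

end Limit

lemma sum_Icc_add_sum_Ico_eq (F G : ℕ → ℝ) {a b : ℕ} (hab : a ≤ b) :
    ∑ s ∈ Icc a b, (((s : ℝ) + 1) * G s - s * F s) +
        ∑ s ∈ Ico a b, ((s : ℝ) + 1) * (F (s + 1) - G s) =
      (b + 1) * G b - a * F a := by
  induction b, hab using Nat.le_induction with
  | base => simp
  | succ b hab ih =>
    rw [sum_Icc_succ_top (by omega), sum_Ico_succ_top hab]
    push_cast
    linarith

lemma digit_log_sums_telescope {a : ℕ} (ha : 1 ≤ a) (d : ℕ) :
    ∑ s ∈ Ico a (10 * a),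
        ((10 * (s : ℝ) + d + 1) * log (10 * s + d + 1) - (10 * s + d) * log (10 * s + d)) -
      9 * ∑ j ∈ Icc a (10 * a - 1), (j : ℝ) * log ((10 * j + d + 1) / (10 * j + d)) -
      d * ∑ j ∈ Icc a (10 * a - 1), log ((10 * (j : ℝ) + d + 1) / (10 * j + d)) +
      (∑ j ∈ Ico a (10 * a - 1), (j : ℝ) * log ((10 * j + d + 10) / (10 * j + d + 1)) +
        ∑ j ∈ Ico a (10 * a - 1), log ((10 * (j : ℝ) + d + 10) / (10 * j + d + 1))) =
      10 * a * log (10 * (10 * a) - 9 + d) - a * log (10 * a + d) := by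
  set F : ℕ → ℝ := fun s => log (10 * s + d)
  set G : ℕ → ℝ := fun s => log (10 * s + d + 1)
  have hIcc : Ico a (10 * a) = Icc a (10 * a - 1) := by
    ext j; simp only [mem_Icc, mem_Ico]; omega
  have hdiag : ∑ s ∈ Ico a (10 * a),
        ((10 * (s : ℝ) + d + 1) * log (10 * s + d + 1) - (10 * s + d) * log (10 * s + d)) -
      9 * ∑ j ∈ Icc a (10 * a - 1), (j : ℝ) * log ((10 * j + d + 1) / (10 * j + d)) -
      d * ∑ j ∈ Icc a (10 * a - 1), log ((10 * (j : ℝ) + d + 1) / (10 * j + d)) =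
      ∑ s ∈ Icc a (10 * a - 1), (((s : ℝ) + 1) * G s - s * F s) := by
    rw [hIcc, mul_sum, mul_sum, ← sum_sub_distrib, ← sum_sub_distrib]
    refine sum_congr rfl fun j hj => ?_
    have : (1 : ℝ) ≤ j := by exact_mod_cast ha.trans (mem_Icc.1 hj).1
    rw [log_div (by positivity) (by positivity)]
    ring
  have hshift :
      ∑ j ∈ Ico a (10 * a - 1), (j : ℝ) * log ((10 * j + d + 10) / (10 * j + d + 1)) +
      ∑ j ∈ Ico a (10 * a - 1), log ((10 * (j : ℝ) + d + 10) / (10 * j + d + 1)) =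
      ∑ s ∈ Ico a (10 * a - 1), ((s : ℝ) + 1) * (F (s + 1) - G s) := by
    rw [← sum_add_distrib]
    refine sum_congr rfl fun j _ => ?_
    rw [log_div (by positivity) (by positivity)]
    simp only [F, G]
    push_cast
    ring_nf
  have hb : ((10 * a - 1 : ℕ) : ℝ) + 1 = 10 * a := by
    push_cast [Nat.cast_sub (by omega : 1 ≤ 10 * a)]; ring
  rw [hdiag, hshift, sum_Icc_add_sum_Ico_eq F G (by omega), hb]
  simp only [F, G]
  congr 3
  rw [show ((10 * a - 1 : ℕ) : ℝ) = 10 * a - 1 by linarith]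
  ring

lemma pdigLimit_eq {p : ℕ} (hp : 2 ≤ p) (d : ℕ) :
    pdigLimit p d = 1 / 10 +
      ((∑ j ∈ Finset.Icc (10 ^ (p - 2) : ℕ) (10 ^ (p - 1) - 2),
          (j : ℝ) * Real.log ((10 * j + d + 10) / (10 * j + d + 1))) +
        (∑ j ∈ Finset.Icc (10 ^ (p - 2) : ℕ) (10 ^ (p - 1) - 2),
          Real.log ((10 * (j : ℝ) + d + 10) / (10 * j + d + 1))) -
        9 * (∑ j ∈ Finset.Icc (10 ^ (p - 2) : ℕ) (10 ^ (p - 1) - 1),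
          (j : ℝ) * Real.log ((10 * j + d + 1) / (10 * j + d))) -
        (d : ℝ) * (∑ j ∈ Finset.Icc (10 ^ (p - 2) : ℕ) (10 ^ (p - 1) - 1),
          Real.log ((10 * (j : ℝ) + d + 1) / (10 * j + d)))) / (9 * 10 ^ (p - 1)) +
      (1 / 90) * Real.log (((10 : ℝ) ^ (p - 1) + d) / 10 ^ (p - 1)) +
      (1 / 9) * Real.log ((10 : ℝ) ^ p / ((10 : ℝ) ^ p - 10 + d + 1)) := by
  set a := 10 ^ (p - 2) with ha
  have ha₁ : 1 ≤ a := Nat.one_le_pow _ _ (by norm_num)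
  have ha₁r : (1 : ℝ) ≤ a := by exact_mod_cast ha₁
  have hK : 10 ^ (p - 1) = 10 * a := by rw [ha, ← pow_succ']; congr 1; omega
  have hKr : (10 : ℝ) ^ (p - 1) = 10 * a := by exact_mod_cast hK
  have hpr : (10 : ℝ) ^ p = 10 * (10 * a) := by rw [← hKr, ← pow_succ']; congr 1; omega
  have hlog₁ : log ((10 : ℝ) ^ p / ((10 : ℝ) ^ p - 10 + d + 1)) =
      log 10 + log (10 * a) - log (10 * (10 * a) - 9 + d) := by
    rw [hpr, log_div (by positivity) (by nlinarith), log_mul (by norm_num) (by positivity)]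
    congr 2; ring
  have hlog₂ : log (((10 : ℝ) ^ (p - 1) + d) / 10 ^ (p - 1)) =
      log (10 * a + d) - log (10 * a) := by
    rw [hKr, log_div (by positivity) (by positivity)]
  have htele := digit_log_sums_telescope ha₁ d
  rw [pdigLimit, ← ha, hK, show 10 * a - 2 = 10 * a - 1 - 1 by omega,
    Icc_sub_one_right_eq_Ico_of_not_isMin (by simp; omega), hlog₁, hlog₂, hKr]
  rw [show ∑ j ∈ Ico a (10 * a - 1), (j : ℝ) * log ((10 * j + d + 10) / (10 * j + d + 1)) +
      ∑ j ∈ Ico a (10 * a - 1), log ((10 * (j : ℝ) + d + 10) / (10 * j + d + 1)) -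
      9 * ∑ j ∈ Icc a (10 * a - 1), (j : ℝ) * log ((10 * j + d + 1) / (10 * j + d)) -
      d * ∑ j ∈ Icc a (10 * a - 1), log ((10 * (j : ℝ) + d + 1) / (10 * j + d)) =
      10 * a * log (10 * (10 * a) - 9 + d) - a * log (10 * a + d) -
        ∑ s ∈ Ico a (10 * a), ((10 * (s : ℝ) + d + 1) * log (10 * s + d + 1) -
          (10 * s + d) * log (10 * s + d)) by linarith]
  field_simp
  ring

theorem stmt11 (p d : ℕ) (hp : 2 ≤ p) (hd : d ≤ 9) :
    Filter.Tendsto (fun n => Pdig p d (10 ^ n - 1)) Filter.atTop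
      (nhds (1 / 10 +
      ((∑ j ∈ Finset.Icc (10 ^ (p - 2) : ℕ) (10 ^ (p - 1) - 2),
          (j : ℝ) * Real.log ((10 * j + d + 10) / (10 * j + d + 1))) +
        (∑ j ∈ Finset.Icc (10 ^ (p - 2) : ℕ) (10 ^ (p - 1) - 2),
          Real.log ((10 * (j : ℝ) + d + 10) / (10 * j + d + 1))) -
        9 * (∑ j ∈ Finset.Icc (10 ^ (p - 2) : ℕ) (10 ^ (p - 1) - 1),
          (j : ℝ) * Real.log ((10 * j + d + 1) / (10 * j + d))) -
        (d : ℝ) * (∑ j ∈ Finset.Icc (10 ^ (p - 2) : ℕ) (10 ^ (p - 1) - 1),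
          Real.log ((10 * (j : ℝ) + d + 1) / (10 * j + d)))) / (9 * 10 ^ (p - 1)) +
      (1 / 90) * Real.log (((10 : ℝ) ^ (p - 1) + d) / 10 ^ (p - 1)) +
      (1 / 9) * Real.log ((10 : ℝ) ^ p / ((10 : ℝ) ^ p - 10 + d + 1)))) := by
  rw [← pdigLimit_eq hp d]
  exact (tendsto_add_atTop_iff_nat p).1 <|
    (tendsto_Pdig_pow_sub_one hp (by omega)).congr fun M => by rw [add_comm p M]
end
end

section
/- Let $p \ge 2$, $d \in \{0,\dots,9\}$, and $q \ge 1$ with $N = q + 10^{p-1} - 1$ having $p$-th digit different from $d$. Writing $10^{p+k_q} \le N < 10^{p+k_q+1}$ with $k_q \ge -1$ and letting $t$ be the number of full blocks $[(10j+d)10^{k_q+1},(10j+d+1)10^{k_q+1}-1]$, $j \ge 10^{p-2}$, contained in $[10^{p+k_q}, N]$, the probability that a uniformly random integer in $[10^{p-1}, N]$ has $p$-th digit $d$ equals $\frac{10^{k_q+1}(10^{p-2}+t) - 10^{p-2}}{q}$. -/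
open Finset Real Filter

noncomputable section

/-!
An integer `m ≥ 10^(p-1)` with `L + 1` digits has `p`-th digit `d` exactly when
`m / 10^e = 10 j + d` for `e = L + 1 - p` and some `(p-1)`-digit prefix `j`, i.e. when `m` lies in
the block of the `10^e` integers starting with the digits of `10 j + d`. These blocks are pairwise
disjoint. Below `10^(p+K-1)` every block is whole, contributing
`9 · 10^(p-2) · (1 + 10 + ⋯ + 10^(K-1)) = 10^(p-2) (10^K - 1)` integers; since the `p`-th digit of
`N` is not `d`, `N` splits no block with `e = K`, so the top range contributes `10^K` per block
lying below `N`.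
-/

def prefixRange (p : ℕ) : Finset ℕ := Icc (10 ^ (p - 2)) (10 ^ (p - 1) - 1)

def digitBlock (d j e : ℕ) : Finset ℕ := Icc ((10 * j + d) * 10 ^ e) ((10 * j + d + 1) * 10 ^ e - 1)

lemma mem_prefixRange {p j : ℕ} : j ∈ prefixRange p ↔ 10 ^ (p - 2) ≤ j ∧ j < 10 ^ (p - 1) := by
  have : 0 < 10 ^ (p - 1) := by positivity
  rw [prefixRange, mem_Icc]
  omega

lemma card_prefixRange {p : ℕ} (hp : 2 ≤ p) : #(prefixRange p) = 9 * 10 ^ (p - 2) := by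
  have : 0 < 10 ^ (p - 2) := by positivity
  rw [prefixRange, Nat.card_Icc, show p - 1 = p - 2 + 1 by omega, pow_succ]
  omega

lemma mem_digitBlock {d j e m : ℕ} : m ∈ digitBlock d j e ↔ m / 10 ^ e = 10 * j + d := by
  rw [digitBlock, mem_Icc, add_one_mul, Nat.div_eq_iff (by positivity)]

lemma card_digitBlock (d j e : ℕ) : #(digitBlock d j e) = 10 ^ e := by
  have : 0 < 10 ^ e := by positivity
  rw [digitBlock, Nat.card_Icc, add_one_mul]
  omega

section

variable {p d j e m : ℕ}

lemma ten_mul_add_mem_Ico (hp : 2 ≤ p) (hd : d ≤ 9) (hj : j ∈ prefixRange p) :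
    10 * j + d ∈ Ico (10 ^ (p - 1)) (10 ^ (p - 1 + 1)) := by
  have hpow : 10 ^ (p - 1) = 10 ^ (p - 2) * 10 := by rw [← pow_succ]; congr 1; omega
  rw [mem_prefixRange, hpow] at hj
  rw [mem_Ico, pow_succ, hpow]
  omega

lemma log_eq_of_div_pow_eq (hp : 2 ≤ p) (hd : d ≤ 9) (hj : j ∈ prefixRange p)
    (hm : m / 10 ^ e = 10 * j + d) : Nat.log 10 m = p - 1 + e := by
  have hlog : Nat.log 10 (10 * j + d) = p - 1 :=
    Nat.log_eq_of_pow_le_of_lt_pow (mem_Ico.1 (ten_mul_add_mem_Ico hp hd hj)).1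
      (mem_Ico.1 (ten_mul_add_mem_Ico hp hd hj)).2
  have := Nat.log_div_base_pow 10 m e
  rw [hm, hlog] at this
  omega

lemma pthDigit_eq_of_div_pow_eq (hp : 2 ≤ p) (hd : d ≤ 9) (hj : j ∈ prefixRange p)
    (hm : m / 10 ^ e = 10 * j + d) : pthDigit p m = d := by
  rw [pthDigit, log_eq_of_div_pow_eq hp hd hj hm, show p - 1 + e + 1 - p = e by omega, hm]
  omega

lemma exists_div_pow_eq_pthDigit (hp : 2 ≤ p) (hm : 10 ^ (p - 1) ≤ m) :
    ∃ j ∈ prefixRange p, m / 10 ^ (Nat.log 10 m + 1 - p) = 10 * j + pthDigit p m := by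
  set e := Nat.log 10 m + 1 - p
  have hlog : Nat.log 10 m = p - 1 + e := by
    have := Nat.le_log_of_pow_le (by norm_num) hm
    omega
  have hm0 : m ≠ 0 := ((pow_pos (by norm_num) _).trans_le hm).ne'
  refine ⟨m / 10 ^ (e + 1), mem_prefixRange.2 ⟨?_, ?_⟩, ?_⟩
  · rw [Nat.le_div_iff_mul_le (by positivity), ← pow_add,
      show p - 2 + (e + 1) = p - 1 + e by omega, ← hlog]
    exact Nat.pow_log_le_self 10 hm0
  · rw [Nat.div_lt_iff_lt_mul (by positivity), ← pow_add,
      show p - 1 + (e + 1) = p - 1 + e + 1 by omega, ← hlog]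
    exact Nat.lt_pow_succ_log_self (by norm_num) m
  · rw [pow_succ, ← Nat.div_div_eq_div_mul]
    exact (Nat.div_add_mod _ 10).symm

lemma pairwiseDisjoint_digitBlock (hp : 2 ≤ p) (hd : d ≤ 9) (s : Finset ℕ) :
    (↑(prefixRange p ×ˢ s) : Set (ℕ × ℕ)).PairwiseDisjoint fun x => digitBlock d x.1 x.2 := by
  rintro ⟨j, e⟩ hx ⟨j', e'⟩ hy hne
  simp only [coe_product, Set.mem_prod, mem_coe] at hx hy
  refine disjoint_left.2 fun m hm hm' => hne ?_
  simp only [mem_digitBlock] at hm hm'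
  have he : e = e' := by
    have := (log_eq_of_div_pow_eq hp hd hx.1 hm).symm.trans (log_eq_of_div_pow_eq hp hd hy.1 hm')
    omega
  subst he
  rw [hm] at hm'
  simp only [Prod.mk.injEq, and_true]
  omega

end

lemma filter_Icc_le_of_notMem {a b N : ℕ} (hN : N ∉ Icc a b) :
    (Icc a b).filter (· ≤ N) = if b ≤ N then Icc a b else ∅ := by
  rw [mem_Icc] at hN
  ext m
  split_ifs <;> simp only [mem_filter, mem_Icc, notMem_empty] <;> grind

section

variable {p d N K : ℕ}

lemma filter_pthDigit_eq_biUnion (hp : 2 ≤ p) (hd : d ≤ 9) (hK : N < 10 ^ (p + K)) :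
    (Icc (10 ^ (p - 1)) N).filter (pthDigit p · = d) =
      ((prefixRange p ×ˢ range (K + 1)).biUnion fun x => digitBlock d x.1 x.2).filter (· ≤ N) := by
  ext m
  simp only [mem_filter, mem_biUnion, mem_product, mem_range, mem_Icc, mem_digitBlock]
  constructor
  · rintro ⟨⟨hm, hmN⟩, rfl⟩
    obtain ⟨j, hj, hjm⟩ := exists_div_pow_eq_pthDigit hp hm
    have : Nat.log 10 m < p + K :=
      Nat.log_lt_of_lt_pow ((pow_pos (by norm_num) _).trans_le hm).ne' (hmN.trans_lt hK)
    exact ⟨⟨(j, Nat.log 10 m + 1 - p), ⟨hj, by omega⟩, hjm⟩, hmN⟩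
  · rintro ⟨⟨⟨j, e⟩, ⟨hj, -⟩, hm⟩, hmN⟩
    have : 10 ^ (p - 1) ≤ m / 10 ^ e := hm ▸ (mem_Ico.1 (ten_mul_add_mem_Ico hp hd hj)).1
    exact ⟨⟨this.trans (Nat.div_le_self _ _), hmN⟩, pthDigit_eq_of_div_pow_eq hp hd hj hm⟩

lemma sum_card_filter_digitBlock (hp : 2 ≤ p) (hd : d ≤ 9) (hdig : pthDigit p N ≠ d)
    (hK : 10 ^ (p + K - 1) ≤ N) {j : ℕ} (hj : j ∈ prefixRange p) :
    ∑ e ∈ range (K + 1), #((digitBlock d j e).filter (· ≤ N)) =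
      ∑ e ∈ range K, 10 ^ e + if (10 * j + d + 1) * 10 ^ K - 1 ≤ N then 10 ^ K else 0 := by
  rw [sum_range_succ]
  congr 1
  · refine sum_congr rfl fun e he => ?_
    rw [filter_true_of_mem fun m hm => ?_, card_digitBlock]
    rw [mem_digitBlock] at hm
    have := Nat.lt_pow_succ_log_self (by norm_num : 1 < 10) m
    rw [log_eq_of_div_pow_eq hp hd hj hm] at this
    have := Nat.pow_le_pow_right (by norm_num : 0 < 10) (show p - 1 + e + 1 ≤ p + K - 1 by
      rw [mem_range] at he; omega)
    omega
  · have hN : N ∉ digitBlock d j K := fun h =>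
      hdig (pthDigit_eq_of_div_pow_eq hp hd hj (mem_digitBlock.1 h))
    rw [digitBlock] at hN ⊢
    rw [filter_Icc_le_of_notMem hN]
    split_ifs
    · exact card_digitBlock d j K
    · rfl

theorem digitCount_add_eq (hp : 2 ≤ p) (hd : d ≤ 9) (hdig : pthDigit p N ≠ d)
    (hK1 : 10 ^ (p + K - 1) ≤ N) (hK2 : N < 10 ^ (p + K)) :
    digitCount p d N + 10 ^ (p - 2) = 10 ^ K * (10 ^ (p - 2) +
      #((prefixRange p).filter fun j => 10 ^ (p + K - 1) ≤ (10 * j + d) * 10 ^ K ∧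
        (10 * j + d + 1) * 10 ^ K - 1 ≤ N)) := by
  have hcount : digitCount p d N = #(prefixRange p) * ∑ e ∈ range K, 10 ^ e +
      10 ^ K * #((prefixRange p).filter fun j => (10 * j + d + 1) * 10 ^ K - 1 ≤ N) := by
    rw [digitCount, filter_pthDigit_eq_biUnion hp hd hK2, filter_biUnion,
      card_biUnion ((pairwiseDisjoint_digitBlock hp hd _).mono fun _ => filter_subset _ _),
      sum_product, sum_congr rfl fun j hj => sum_card_filter_digitBlock hp hd hdig hK1 hj,
      sum_add_distrib, sum_const, ← sum_filter, sum_const, smul_eq_mul, smul_eq_mul]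
    ring
  have hlow : ∀ j ∈ prefixRange p, 10 ^ (p + K - 1) ≤ (10 * j + d) * 10 ^ K := fun j hj => by
    rw [show p + K - 1 = p - 1 + K by omega, pow_add]
    exact Nat.mul_le_mul_right _ (mem_Ico.1 (ten_mul_add_mem_Ico hp hd hj)).1
  have hgeom : (∑ e ∈ range K, 10 ^ e) * 9 + 1 = 10 ^ K := geom_sum_mul_add 9 K
  rw [filter_congr fun j hj => and_iff_right (hlow j hj), hcount, card_prefixRange hp, ← hgeom]
  ring

end

theorem stmt14_general (p d q N K : ℕ) (hp : 2 ≤ p) (hd : d ≤ 9)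
    (hdig : pthDigit p N ≠ d)
    (hK1 : 10 ^ (p + K - 1) ≤ N) (hK2 : N < 10 ^ (p + K)) :
    (digitCount p d N : ℝ) / q =
      ((10 : ℝ) ^ K * (10 ^ (p - 2) +
        (((Finset.Icc (10 ^ (p - 2)) (10 ^ (p - 1) - 1)).filter
          (fun j => 10 ^ (p + K - 1) ≤ (10 * j + d) * 10 ^ K ∧
            (10 * j + d + 1) * 10 ^ K - 1 ≤ N)).card : ℝ)) - 10 ^ (p - 2)) / q := by
  have h := congrArg (Nat.cast : ℕ → ℝ) (digitCount_add_eq hp hd hdig hK1 hK2)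
  push_cast [prefixRange] at h
  rw [← h, add_sub_cancel_right]

theorem stmt14 (p d q N K : ℕ) (hp : 2 ≤ p) (hd : d ≤ 9) (hq : 1 ≤ q)
    (hN : N = q + 10 ^ (p - 1) - 1) (hdig : pthDigit p N ≠ d)
    (hK1 : 10 ^ (p + K - 1) ≤ N) (hK2 : N < 10 ^ (p + K)) :
    (digitCount p d N : ℝ) / q =
      ((10 : ℝ) ^ K * (10 ^ (p - 2) +
        (((Finset.Icc (10 ^ (p - 2)) (10 ^ (p - 1) - 1)).filter
          (fun j => 10 ^ (p + K - 1) ≤ (10 * j + d) * 10 ^ K ∧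
            (10 * j + d + 1) * 10 ^ K - 1 ≤ N)).card : ℝ)) - 10 ^ (p - 2)) / q :=
  stmt14_general p d q N K hp hd hdig hK1 hK2
end
end
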